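/- Let P be an L-convex polyomino and let R be its (unique) maximal rectangle of full width w(P). Then the collection of cells P_1 obtained by deleting the rows of R from P (and shifting the rows above R down to close the gap) is again an L-convex polyomino. -/
import Mathlib


/-- Two cells of `ℤ × ℤ` are adjacent if they share an edge. -/
def CellAdj (a b : ℤ × ℤ) : Prop :=
  (a.1 = b.1 ∧ (a.2 = b.2 + 1 ∨ b.2 = a.2 + 1)) ∨
  (a.2 = b.2 ∧ (a.1 = b.1 + 1 ∨ b.1 = a.1 + 1))

/-- `P` is an L-convex polyomino: it is row convex, column convex, and any two of
its cells are joined by a path of distinct cells of `P` with at most one change of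
direction. Cells are recorded as `(row, column)`. -/
def IsLConvex (P : Finset (ℤ × ℤ)) : Prop :=
  (∀ i j j' j'' : ℤ, (i, j) ∈ P → (i, j'') ∈ P → j ≤ j' → j' ≤ j'' → (i, j') ∈ P) ∧
  (∀ i i' i'' j : ℤ, (i, j) ∈ P → (i'', j) ∈ P → i ≤ i' → i' ≤ i'' → (i', j) ∈ P) ∧
  (∀ a ∈ P, ∀ b ∈ P, ∃ (k : ℕ) (c : ℕ → ℤ × ℤ),
    c 0 = a ∧ c k = b ∧ (∀ i ≤ k, c i ∈ P) ∧
    (∀ i < k, CellAdj (c i) (c (i + 1))) ∧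
    (∀ i j, i ≤ k → j ≤ k → c i = c j → i = j) ∧
    ((Finset.Ioo 0 k).filter (fun i =>
      (c (i - 1)).1 ≠ (c (i + 1)).1 ∧ (c (i - 1)).2 ≠ (c (i + 1)).2)).card ≤ 1)

/-- Number of cells of `P` in row `i`. -/
def rowCount (P : Finset (ℤ × ℤ)) (i : ℤ) : ℕ := (P.filter (fun c => c.1 = i)).card

/-- Number of cells of `P` in column `j`. -/
def colCount (P : Finset (ℤ × ℤ)) (j : ℤ) : ℕ := (P.filter (fun c => c.2 = j)).card

/-- `Q` is obtained from `P` by deleting the (unique) maximal rectangle of full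
width: rows `s, …, s+d-1` of `P` are exactly the full-width rows (containing a cell
in every occupied column of `P`), all other rows are strictly shorter, and `Q`
consists of the rows below row `s` together with the rows from `s+d` on, shifted
down by `d` to close the gap. -/
def DerivedStep (P Q : Finset (ℤ × ℤ)) : Prop :=
  ∃ (s : ℤ) (d : ℕ), 0 < d ∧
    (∀ i : ℤ, s ≤ i → i < s + d → rowCount P i = (P.image Prod.snd).card) ∧
    (∀ i : ℤ, i < s ∨ s + d ≤ i → rowCount P i < (P.image Prod.snd).card) ∧
    Q = (P.filter (fun c => c.1 < s)) ∪
        ((P.filter (fun c => s + d ≤ c.1)).image (fun c => (c.1 - d, c.2)))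

lemma cellAdj_swap {x y : ℤ × ℤ} (h : CellAdj x y) : CellAdj (x.2, x.1) (y.2, y.1) := by
  unfold CellAdj at *; dsimp only; tauto

lemma straightRunAux (c : ℕ → ℤ × ℤ) (m : ℕ)
    (adj : ∀ i < m, CellAdj (c i) (c (i + 1)))
    (noturn : ∀ i, 0 < i → i < m →
      ¬((c (i - 1)).1 ≠ (c (i + 1)).1 ∧ (c (i - 1)).2 ≠ (c (i + 1)).2))
    (h0 : (c 1).1 = (c 0).1) :
    ∀ i, i + 1 ≤ m → (c i).1 = (c 0).1 ∧ (c (i + 1)).1 = (c 0).1 := by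
  intro i
  induction i with
  | zero => intro _; exact ⟨rfl, h0⟩
  | succ n ih =>
    intro hm
    obtain ⟨hA, hB⟩ := ih (by omega)
    refine ⟨hB, ?_⟩
    rcases adj (n + 1) (by omega) with ⟨hr, _⟩ | ⟨hc2, hr1⟩
    · rw [← hr]; exact hB
    · exfalso
      have hnt := noturn (n + 1) (by omega) (by omega)
      simp only [Nat.add_sub_cancel] at hnt
      rcases adj n (by omega) with ⟨_, hcol⟩ | ⟨_, hrow⟩
      · rcases hcol with hcol | hcol <;> rcases hr1 with hr1 | hr1 <;>
          exact hnt ⟨by omega, by omega⟩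
      · omega

lemma straightRun (c : ℕ → ℤ × ℤ) (m : ℕ)
    (adj : ∀ i < m, CellAdj (c i) (c (i + 1)))
    (noturn : ∀ i, 0 < i → i < m →
      ¬((c (i - 1)).1 ≠ (c (i + 1)).1 ∧ (c (i - 1)).2 ≠ (c (i + 1)).2))
    (h0 : (c 1).1 = (c 0).1) :
    ∀ i ≤ m, (c i).1 = (c 0).1 := by
  intro i hi
  match i with
  | 0 => rfl
  | n + 1 => exact (straightRunAux c m adj noturn h0 n hi).2

lemma crossingAux (S : ℤ × ℤ → Prop) (k : ℕ) (c : ℕ → ℤ × ℤ)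
    (hmem : ∀ i ≤ k, S (c i))
    (adj : ∀ i < k, CellAdj (c i) (c (i + 1)))
    (hturn : ((Finset.Ioo 0 k).filter (fun i =>
      (c (i - 1)).1 ≠ (c (i + 1)).1 ∧ (c (i - 1)).2 ≠ (c (i + 1)).2)).card ≤ 1)
    (hk : 0 < k) (h0 : (c 1).1 = (c 0).1) :
    S ((c 0).1, (c k).2) := by
  classical
  set T := (Finset.Ioo 0 k).filter (fun i =>
      (c (i - 1)).1 ≠ (c (i + 1)).1 ∧ (c (i - 1)).2 ≠ (c (i + 1)).2) with hT
  by_cases hTe : T = ∅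
  · have noturn : ∀ i, 0 < i → i < k →
        ¬((c (i - 1)).1 ≠ (c (i + 1)).1 ∧ (c (i - 1)).2 ≠ (c (i + 1)).2) := by
      intro i h1 h2 hcontra
      have hiT : i ∈ T := by
        rw [hT]; exact Finset.mem_filter.2 ⟨Finset.mem_Ioo.2 ⟨h1, h2⟩, hcontra⟩
      rw [hTe] at hiT; exact absurd hiT (Finset.notMem_empty i)
    have hrow := straightRun c k adj noturn h0 k le_rfl
    have hm := hmem k le_rfl
    rw [← hrow, Prod.mk.eta]
    exact hm
  · obtain ⟨m, hm⟩ := Finset.nonempty_iff_ne_empty.2 hTe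
    have hmF := Finset.mem_filter.1 hm
    obtain ⟨hm0, hmk⟩ := Finset.mem_Ioo.1 hmF.1
    have hmturn := hmF.2
    have huniq : ∀ i, 0 < i → i < k → i ≠ m →
        ¬((c (i - 1)).1 ≠ (c (i + 1)).1 ∧ (c (i - 1)).2 ≠ (c (i + 1)).2) := by
      intro i h1 h2 hne hcontra
      have hiT : i ∈ T := by
        rw [hT]; exact Finset.mem_filter.2 ⟨Finset.mem_Ioo.2 ⟨h1, h2⟩, hcontra⟩
      have : 1 < T.card := Finset.one_lt_card.2 ⟨i, hiT, m, hm, hne⟩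
      omega
    have rows1 := straightRun c m (fun i hi => adj i (by omega))
      (fun i hi1 hi2 => huniq i hi1 (by omega) (by omega)) h0
    have hstep : (c m).2 = (c (m + 1)).2 := by
      rcases adj m hmk with ⟨hr, _⟩ | ⟨hc2, _⟩
      · exfalso
        apply hmturn.1
        have e1 : (c (m - 1)).1 = (c 0).1 := rows1 (m - 1) (by omega)
        have e2 : (c m).1 = (c 0).1 := rows1 m le_rfl
        omega
      · exact hc2
    -- second segment: columns constant
    have adj2 : ∀ u < k - m,
        CellAdj ((fun u => ((c (m + u)).2, (c (m + u)).1)) u)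
          ((fun u => ((c (m + u)).2, (c (m + u)).1)) (u + 1)) := by
      intro u hu
      exact cellAdj_swap (adj (m + u) (by omega))
    have noturn2 : ∀ u, 0 < u → u < k - m →
        ¬(((fun u => ((c (m + u)).2, (c (m + u)).1)) (u - 1)).1 ≠
            ((fun u => ((c (m + u)).2, (c (m + u)).1)) (u + 1)).1 ∧
          ((fun u => ((c (m + u)).2, (c (m + u)).1)) (u - 1)).2 ≠
            ((fun u => ((c (m + u)).2, (c (m + u)).1)) (u + 1)).2) := by
      intro u h1 h2 hcon
      dsimp only at hcon
      have e : m + (u - 1) = (m + u) - 1 := by omega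
      rw [e] at hcon
      exact huniq (m + u) (by omega) (by omega) (by omega) ⟨hcon.2, hcon.1⟩
    have h02 : ((fun u => ((c (m + u)).2, (c (m + u)).1)) 1).1 =
        ((fun u => ((c (m + u)).2, (c (m + u)).1)) 0).1 := by
      dsimp only
      exact hstep.symm
    have cols2 := straightRun (fun u => ((c (m + u)).2, (c (m + u)).1)) (k - m)
      adj2 noturn2 h02 (k - m) le_rfl
    dsimp only at cols2
    have e : m + (k - m) = k := by omega
    rw [e] at cols2
    -- cols2 : (c k).2 = (c m).2
    have hfin : ((c 0).1, (c k).2) = c m := by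
      rw [← rows1 m le_rfl, cols2]; simp
    rw [hfin]
    exact hmem m (le_of_lt hmk)

lemma crossing {P : Finset (ℤ × ℤ)} (hP : IsLConvex P) {a b : ℤ × ℤ}
    (ha : a ∈ P) (hb : b ∈ P) : (a.1, b.2) ∈ P ∨ (b.1, a.2) ∈ P := by
  classical
  obtain ⟨_, _, hpath⟩ := hP
  obtain ⟨k, c, hc0, hck, hmem, hadj, hinj, hturn⟩ := hpath a ha b hb
  rcases Nat.eq_zero_or_pos k with rfl | hk
  · have hab : a = b := by rw [← hc0, ← hck]
    left
    rw [hab, Prod.mk.eta]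
    exact hb
  · rcases hadj 0 hk with ⟨hr, _⟩ | ⟨hc2, _⟩
    · left
      have := crossingAux (fun p => p ∈ P) k c hmem hadj hturn hk hr.symm
      rwa [hc0, hck] at this
    · right
      have hturn' : ((Finset.Ioo 0 k).filter (fun i =>
          ((fun t => ((c t).2, (c t).1)) (i - 1)).1 ≠ ((fun t => ((c t).2, (c t).1)) (i + 1)).1 ∧
          ((fun t => ((c t).2, (c t).1)) (i - 1)).2 ≠ ((fun t => ((c t).2, (c t).1)) (i + 1)).2)).card ≤ 1 := by
        have heq : (Finset.Ioo 0 k).filter (fun i =>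
            ((fun t => ((c t).2, (c t).1)) (i - 1)).1 ≠ ((fun t => ((c t).2, (c t).1)) (i + 1)).1 ∧
            ((fun t => ((c t).2, (c t).1)) (i - 1)).2 ≠ ((fun t => ((c t).2, (c t).1)) (i + 1)).2) =
            (Finset.Ioo 0 k).filter (fun i =>
            (c (i - 1)).1 ≠ (c (i + 1)).1 ∧ (c (i - 1)).2 ≠ (c (i + 1)).2) := by
          apply Finset.filter_congr
          intro x _
          dsimp only
          constructor
          · intro hh; exact ⟨hh.2, hh.1⟩
          · intro hh; exact ⟨hh.2, hh.1⟩
        rw [heq]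
        exact hturn
      have := crossingAux (fun p => (p.2, p.1) ∈ P) k (fun t => ((c t).2, (c t).1))
        (fun i hi => by dsimp only; rw [Prod.mk.eta]; exact hmem i hi)
        (fun i hi => cellAdj_swap (hadj i hi))
        hturn' hk (by dsimp only; exact hc2.symm)
      dsimp only at this
      rw [hc0, hck] at this
      exact this

lemma buildPath (S : ℤ × ℤ → Prop) (a b : ℤ × ℤ)
    (hseg1 : ∀ j : ℤ, min a.2 b.2 ≤ j → j ≤ max a.2 b.2 → S (a.1, j))
    (hseg2 : ∀ i : ℤ, min a.1 b.1 ≤ i → i ≤ max a.1 b.1 → S (i, b.2)) :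
    ∃ (k : ℕ) (c : ℕ → ℤ × ℤ),
      c 0 = a ∧ c k = b ∧ (∀ i ≤ k, S (c i)) ∧
      (∀ i < k, CellAdj (c i) (c (i + 1))) ∧
      (∀ i j, i ≤ k → j ≤ k → c i = c j → i = j) ∧
      ((Finset.Ioo 0 k).filter (fun i =>
        (c (i - 1)).1 ≠ (c (i + 1)).1 ∧ (c (i - 1)).2 ≠ (c (i + 1)).2)).card ≤ 1 := by
  classical
  obtain ⟨h, hh⟩ : ∃ n : ℕ, n = (b.2 - a.2).natAbs := ⟨_, rfl⟩
  obtain ⟨v, hv⟩ : ∃ n : ℕ, n = (b.1 - a.1).natAbs := ⟨_, rfl⟩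
  obtain ⟨εc, hεc⟩ : ∃ e : ℤ, e = (if a.2 ≤ b.2 then (1 : ℤ) else -1) := ⟨_, rfl⟩
  obtain ⟨εr, hεr⟩ : ∃ e : ℤ, e = (if a.1 ≤ b.1 then (1 : ℤ) else -1) := ⟨_, rfl⟩
  have εcpm : εc = 1 ∨ εc = -1 := by rw [hεc]; split_ifs <;> simp
  have εrpm : εr = 1 ∨ εr = -1 := by rw [hεr]; split_ifs <;> simp
  have Ec : εc * h = b.2 - a.2 := by
    rw [hεc]; split_ifs with hc <;> omega
  have Er : εr * v = b.1 - a.1 := by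
    rw [hεr]; split_ifs with hc <;> omega
  have hbound1 : ∀ t : ℕ, t ≤ h →
      min a.2 b.2 ≤ a.2 + εc * t ∧ a.2 + εc * t ≤ max a.2 b.2 := by
    intro t ht
    rcases εcpm with e | e <;> rw [e] at Ec <;> rw [e] <;> constructor
    · exact le_trans (min_le_left _ _) (by omega)
    · exact le_trans (by omega) (le_max_right _ _)
    · exact le_trans (min_le_right _ _) (by omega)
    · exact le_trans (by omega) (le_max_left _ _)
  have hbound2 : ∀ t : ℕ, t ≤ v →
      min a.1 b.1 ≤ a.1 + εr * t ∧ a.1 + εr * t ≤ max a.1 b.1 := by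
    intro t ht
    rcases εrpm with e | e <;> rw [e] at Er <;> rw [e] <;> constructor
    · exact le_trans (min_le_left _ _) (by omega)
    · exact le_trans (by omega) (le_max_right _ _)
    · exact le_trans (min_le_right _ _) (by omega)
    · exact le_trans (by omega) (le_max_left _ _)
  refine ⟨h + v,
    fun t => if t ≤ h then (a.1, a.2 + εc * t) else (a.1 + εr * ((t : ℤ) - h), b.2),
    ?_, ?_, ?_, ?_, ?_, ?_⟩
  · -- c 0 = a
    simp
  · -- c (h + v) = b
    dsimp only
    by_cases hv0 : v = 0
    · rw [if_pos (by omega : h + v ≤ h)]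
      have e1 : ((h + v : ℕ) : ℤ) = (h : ℤ) := by omega
      rw [e1]
      have e2 : a.1 = b.1 := by omega
      have e3 : a.2 + εc * h = b.2 := by linarith [Ec]
      rw [e2, e3]
    · rw [if_neg (by omega : ¬ h + v ≤ h)]
      have e1 : ((h + v : ℕ) : ℤ) - h = (v : ℤ) := by push_cast; ring
      rw [e1]
      have e2 : a.1 + εr * v = b.1 := by linarith [Er]
      rw [e2]
  · -- membership
    intro t ht
    dsimp only
    by_cases hth : t ≤ h
    · rw [if_pos hth]
      exact hseg1 _ (hbound1 t hth).1 (hbound1 t hth).2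
    · rw [if_neg hth]
      have e1 : (t : ℤ) - h = ((t - h : ℕ) : ℤ) := by omega
      rw [e1]
      exact hseg2 _ (hbound2 (t - h) (by omega)).1 (hbound2 (t - h) (by omega)).2
  · -- adjacency
    intro t ht
    dsimp only
    by_cases h1 : t + 1 ≤ h
    · rw [if_pos (by omega : t ≤ h), if_pos h1]
      unfold CellAdj
      dsimp only
      rcases εcpm with e | e <;> rcases εrpm with f | f <;> subst e <;> subst f <;> omega
    · by_cases h2 : t ≤ h
      · rw [if_pos h2, if_neg h1]
        unfold CellAdj
        dsimp only
        rcases εcpm with e | e <;> rcases εrpm with f | f <;> subst e <;> subst f <;> omega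
      · rw [if_neg h2, if_neg (by omega : ¬ t + 1 ≤ h)]
        unfold CellAdj
        dsimp only
        rcases εcpm with e | e <;> rcases εrpm with f | f <;> subst e <;> subst f <;> omega
  · -- injectivity
    intro t1 t2 ht1 ht2 heq
    dsimp only at heq
    have e1 := congrArg Prod.fst heq
    have e2 := congrArg Prod.snd heq
    clear heq
    split_ifs at e1 e2 with c1 c2 <;> dsimp only at e1 e2 <;>
      rcases εcpm with e | e <;> rcases εrpm with f | f <;> subst e <;> subst f <;> omega
  · -- turn count
    have hsub : ((Finset.Ioo 0 (h + v)).filter (fun i =>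
        ((fun t => if t ≤ h then (a.1, a.2 + εc * t) else (a.1 + εr * ((t : ℤ) - h), b.2)) (i - 1)).1 ≠
          ((fun t => if t ≤ h then (a.1, a.2 + εc * t) else (a.1 + εr * ((t : ℤ) - h), b.2)) (i + 1)).1 ∧
        ((fun t => if t ≤ h then (a.1, a.2 + εc * t) else (a.1 + εr * ((t : ℤ) - h), b.2)) (i - 1)).2 ≠
          ((fun t => if t ≤ h then (a.1, a.2 + εc * t) else (a.1 + εr * ((t : ℤ) - h), b.2)) (i + 1)).2))
        ⊆ {h} := by
      intro t htmem
      obtain ⟨htIoo, hturn⟩ := Finset.mem_filter.1 htmem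
      obtain ⟨ht0, htk⟩ := Finset.mem_Ioo.1 htIoo
      dsimp only at hturn
      rw [Finset.mem_singleton]
      by_contra hne
      rcases Nat.lt_or_ge t h with hlt | hge
      · apply hturn.1
        rw [if_pos (by omega : t - 1 ≤ h), if_pos (by omega : t + 1 ≤ h)]
      · apply hturn.2
        rw [if_neg (by omega : ¬ t + 1 ≤ h)]
        by_cases htm : t - 1 ≤ h
        · rw [if_pos htm]
          have e1 : ((t - 1 : ℕ) : ℤ) = (h : ℤ) := by omega
          dsimp only
          rw [e1]
          linarith [Ec]
        · rw [if_neg htm]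
    exact le_trans (Finset.card_le_card hsub) (by simp)

lemma lconvex_of_crossing (Q : Finset (ℤ × ℤ))
    (rc : ∀ i j j' j'' : ℤ, (i, j) ∈ Q → (i, j'') ∈ Q → j ≤ j' → j' ≤ j'' → (i, j') ∈ Q)
    (cc : ∀ i i' i'' j : ℤ, (i, j) ∈ Q → (i'', j) ∈ Q → i ≤ i' → i' ≤ i'' → (i', j) ∈ Q)
    (cross : ∀ a ∈ Q, ∀ b ∈ Q, (a.1, b.2) ∈ Q ∨ (b.1, a.2) ∈ Q) :
    IsLConvex Q := by
  refine ⟨rc, cc, ?_⟩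
  intro a ha b hb
  have ha' : (a.1, a.2) ∈ Q := by rwa [Prod.mk.eta]
  have hb' : (b.1, b.2) ∈ Q := by rwa [Prod.mk.eta]
  rcases cross a ha b hb with hcor | hcor
  · exact buildPath (fun p => p ∈ Q) a b
      (fun j hj1 hj2 => by
        rcases le_total a.2 b.2 with hle | hle
        · exact rc a.1 a.2 j b.2 ha' hcor
            (by rw [min_eq_left hle] at hj1; exact hj1)
            (by rw [max_eq_right hle] at hj2; exact hj2)
        · exact rc a.1 b.2 j a.2 hcor ha'
            (by rw [min_eq_right hle] at hj1; exact hj1)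
            (by rw [max_eq_left hle] at hj2; exact hj2))
      (fun i hi1 hi2 => by
        rcases le_total a.1 b.1 with hle | hle
        · exact cc a.1 i b.1 b.2 hcor hb'
            (by rw [min_eq_left hle] at hi1; exact hi1)
            (by rw [max_eq_right hle] at hi2; exact hi2)
        · exact cc b.1 i a.1 b.2 hb' hcor
            (by rw [min_eq_right hle] at hi1; exact hi1)
            (by rw [max_eq_left hle] at hi2; exact hi2))
  · obtain ⟨k, c, h0, hk, hmem, hadj, hinj, hturn⟩ :=
      buildPath (fun p => (p.2, p.1) ∈ Q) (a.2, a.1) (b.2, b.1)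
      (fun j hj1 hj2 => by
        dsimp only at hj1 hj2 ⊢
        rcases le_total a.1 b.1 with hle | hle
        · exact cc a.1 j b.1 a.2 ha' hcor
            (by rw [min_eq_left hle] at hj1; exact hj1)
            (by rw [max_eq_right hle] at hj2; exact hj2)
        · exact cc b.1 j a.1 a.2 hcor ha'
            (by rw [min_eq_right hle] at hj1; exact hj1)
            (by rw [max_eq_left hle] at hj2; exact hj2))
      (fun i hi1 hi2 => by
        dsimp only at hi1 hi2 ⊢
        rcases le_total a.2 b.2 with hle | hle
        · exact rc b.1 a.2 i b.2 hcor hb'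
            (by rw [min_eq_left hle] at hi1; exact hi1)
            (by rw [max_eq_right hle] at hi2; exact hi2)
        · exact rc b.1 b.2 i a.2 hb' hcor
            (by rw [min_eq_right hle] at hi1; exact hi1)
            (by rw [max_eq_left hle] at hi2; exact hi2))
    refine ⟨k, fun t => ((c t).2, (c t).1), ?_, ?_, ?_, ?_, ?_, ?_⟩
    · dsimp only; rw [h0]
    · dsimp only; rw [hk]
    · intro i hi
      exact hmem i hi
    · intro i hi
      exact cellAdj_swap (hadj i hi)
    · intro i j hi hj heq
      have f1 := congrArg Prod.fst heq
      have f2 := congrArg Prod.snd heq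
      dsimp only at f1 f2
      exact hinj i j hi hj (Prod.ext f2 f1)
    · have heq : (Finset.Ioo 0 k).filter (fun i =>
          ((fun t => ((c t).2, (c t).1)) (i - 1)).1 ≠ ((fun t => ((c t).2, (c t).1)) (i + 1)).1 ∧
          ((fun t => ((c t).2, (c t).1)) (i - 1)).2 ≠ ((fun t => ((c t).2, (c t).1)) (i + 1)).2) =
          (Finset.Ioo 0 k).filter (fun i =>
          (c (i - 1)).1 ≠ (c (i + 1)).1 ∧ (c (i - 1)).2 ≠ (c (i + 1)).2) := by
        apply Finset.filter_congr
        intro x _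
        dsimp only
        constructor
        · intro hh; exact ⟨hh.2, hh.1⟩
        · intro hh; exact ⟨hh.2, hh.1⟩
      rw [heq]
      exact hturn

/-- Deleting the unique maximal rectangle of full width from an L-convex polyomino
(and closing the gap) yields again an L-convex polyomino. -/
theorem stmt12 (P P₁ : Finset (ℤ × ℤ)) (hP : IsLConvex P)
    (hstep : DerivedStep P P₁) : IsLConvex P₁ := by
  classical
  obtain ⟨s, d, hd, hfull, hshort, hQ⟩ := hstep
  set φ : ℤ → ℤ := fun i => if i < s then i else i + d with hφ
  have memφ : ∀ i j : ℤ, (i, j) ∈ P₁ ↔ (φ i, j) ∈ P := by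
    intro i j
    have memQ : (i, j) ∈ P₁ ↔ ((i < s ∧ (i, j) ∈ P) ∨ (s ≤ i ∧ (i + d, j) ∈ P)) := by
      rw [hQ]
      simp only [Finset.mem_union, Finset.mem_filter, Finset.mem_image]
      constructor
      · rintro (⟨hp, hi⟩ | ⟨⟨x, y⟩, ⟨hp, hx⟩, heq⟩)
        · exact Or.inl ⟨hi, hp⟩
        · rw [Prod.mk.injEq] at heq
          obtain ⟨hx1, hy1⟩ := heq
          right
          have ex : x = i + d := by omega
          constructor
          · omega
          · rw [← ex, ← hy1]; exact hp
      · rintro (⟨h1, h2⟩ | ⟨h1, h2⟩)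
        · exact Or.inl ⟨h2, h1⟩
        · refine Or.inr ⟨(i + d, j), ⟨h2, by omega⟩, ?_⟩
          rw [Prod.mk.injEq]
          constructor <;> [omega; rfl]
    rw [memQ, hφ]
    dsimp only
    split_ifs with hi
    · constructor
      · rintro (⟨_, hp⟩ | ⟨hsi, _⟩)
        · exact hp
        · exact absurd hsi (by omega)
      · intro hp; exact Or.inl ⟨hi, hp⟩
    · constructor
      · rintro (⟨hi', _⟩ | ⟨_, hp⟩)
        · exact absurd hi' hi
        · exact hp
      · intro hp; exact Or.inr ⟨by omega, hp⟩
  obtain ⟨rcP, ccP, hpathP⟩ := hP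
  have φmono : ∀ {x y : ℤ}, x ≤ y → φ x ≤ φ y := by
    intro x y hxy
    rw [hφ]
    dsimp only
    split_ifs <;> omega
  have rcQ : ∀ i j j' j'' : ℤ, (i, j) ∈ P₁ → (i, j'') ∈ P₁ → j ≤ j' → j' ≤ j'' → (i, j') ∈ P₁ := by
    intro i j j' j'' h1 h2 l1 l2
    rw [memφ] at h1 h2 ⊢
    exact rcP (φ i) j j' j'' h1 h2 l1 l2
  have ccQ : ∀ i i' i'' j : ℤ, (i, j) ∈ P₁ → (i'', j) ∈ P₁ → i ≤ i' → i' ≤ i'' → (i', j) ∈ P₁ := by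
    intro i i' i'' j h1 h2 l1 l2
    rw [memφ] at h1 h2 ⊢
    exact ccP (φ i) (φ i') (φ i'') j h1 h2 (φmono l1) (φmono l2)
  have crossQ : ∀ a ∈ P₁, ∀ b ∈ P₁, (a.1, b.2) ∈ P₁ ∨ (b.1, a.2) ∈ P₁ := by
    intro a ha b hb
    have ha' : (φ a.1, a.2) ∈ P := (memφ a.1 a.2).1 (by rwa [Prod.mk.eta])
    have hb' : (φ b.1, b.2) ∈ P := (memφ b.1 b.2).1 (by rwa [Prod.mk.eta])
    rcases crossing ⟨rcP, ccP, hpathP⟩ ha' hb' with hc | hc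
    · left; rw [memφ]; exact hc
    · right; rw [memφ]; exact hc
  exact lconvex_of_crossing P₁ rcQ ccQ crossQ
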